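/- arXiv:1901.06923 — 5 statements merged into one kernel-verified Lean document; each statement's English description precedes it below -/
import Mathlib

section
/- If W : I → O and W' : I → O' are discrete memoryless channels with W' a degradation of W (i.e., there exists a channel W'' : O → O' with W'(y|x) = Σ_{z∈O} W''(y|z) W(z|x)), then for every pair a,b ∈ I, the pairwise Bhattacharyya parameter satisfies Z_{a,b}(W) ≤ Z_{a,b}(W'), where Z_{a,b}(V) = Σ_y √(V(y|a)V(y|b)). -/
/-! For each output `y` of the degraded channel, Cauchy–Schwarz with weights `W''(y|z)` gives
`Σ_z W''(y|z) √(W(z|a) W(z|b)) ≤ √(W'(y|a) W'(y|b))`. Summing over `y` and using that each row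
of `W''` sums to `1` yields `Z_{a,b}(W) ≤ Z_{a,b}(W')`. -/

open Finset

namespace Real

theorem sum_mul_sqrt_mul_le_sqrt_mul {ι : Type*} (s : Finset ι) {w p q : ι → ℝ}
    (hw : ∀ i, 0 ≤ w i) (hp : ∀ i, 0 ≤ p i) (hq : ∀ i, 0 ≤ q i) :
    ∑ i ∈ s, w i * √(p i * q i) ≤ √((∑ i ∈ s, w i * p i) * ∑ i ∈ s, w i * q i) := by
  have hsplit : ∀ i, w i * √(p i * q i) = √(w i * p i) * √(w i * q i) := fun i => by
    rw [← sqrt_mul (mul_nonneg (hw i) (hp i)), show w i * p i * (w i * q i) = w i * w i * (p i * q i)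
      by ring, sqrt_mul (mul_self_nonneg _), sqrt_mul_self (hw i)]
  rw [sqrt_mul (sum_nonneg fun i _ => mul_nonneg (hw i) (hp i))]
  simp only [hsplit]
  exact sum_sqrt_mul_sqrt_le s (fun i => mul_nonneg (hw i) (hp i)) fun i => mul_nonneg (hw i) (hq i)

end Real

noncomputable def bhattacharyya {I O : Type*} [Fintype O] (V : I → O → ℝ) (a b : I) : ℝ :=
  ∑ y, √(V a y * V b y)

theorem bhattacharyya_le_bhattacharyya_comp {I O O' : Type*} [Fintype O] [Fintype O']
    {W : I → O → ℝ} {K : O → O' → ℝ} (hW : ∀ x z, 0 ≤ W x z) (hK0 : ∀ z y, 0 ≤ K z y)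
    (hK1 : ∀ z, ∑ y, K z y = 1) (a b : I) :
    bhattacharyya W a b ≤ bhattacharyya (fun x y => ∑ z, K z y * W x z) a b :=
  calc ∑ z, √(W a z * W b z)
      = ∑ z, (∑ y, K z y) * √(W a z * W b z) := by simp only [hK1, one_mul]
    _ = ∑ y, ∑ z, K z y * √(W a z * W b z) := by simp only [sum_mul]; exact sum_comm
    _ ≤ ∑ y, √((∑ z, K z y * W a z) * ∑ z, K z y * W b z) := sum_le_sum fun y _ =>
        Real.sum_mul_sqrt_mul_le_sqrt_mul _ (fun z => hK0 z y) (hW a) (hW b)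

theorem pairwise_bhattacharyya_le_of_degraded_general
    {I O O' : Type*} [Fintype O] [Fintype O']
    (W : I → O → ℝ) (W' : I → O' → ℝ)
    (hW0 : ∀ x y, 0 ≤ W x y)
    (hdeg : ∃ W'' : O → O' → ℝ, (∀ z y, 0 ≤ W'' z y) ∧ (∀ z, ∑ y, W'' z y = 1) ∧
      ∀ x y, W' x y = ∑ z, W'' z y * W x z) :
    ∀ a b : I, ∑ z, Real.sqrt (W a z * W b z) ≤ ∑ y, Real.sqrt (W' a y * W' b y) := by
  obtain ⟨W'', hW''0, hW''1, hW'⟩ := hdeg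
  obtain rfl : W' = fun x y => ∑ z, W'' z y * W x z := funext₂ hW'
  exact bhattacharyya_le_bhattacharyya_comp hW0 hW''0 hW''1

/-- Degradation increases the pairwise Bhattacharyya parameter:
if `W'` is a degradation of `W`, then `Z_{a,b}(W) ≤ Z_{a,b}(W')` for all inputs `a, b`. -/
theorem pairwise_bhattacharyya_le_of_degraded
    {I O O' : Type*} [Fintype I] [Fintype O] [Fintype O']
    (W : I → O → ℝ) (W' : I → O' → ℝ)
    (hW0 : ∀ x y, 0 ≤ W x y) (hW1 : ∀ x, ∑ y, W x y = 1)
    (hW'0 : ∀ x y, 0 ≤ W' x y) (hW'1 : ∀ x, ∑ y, W' x y = 1)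
    (hdeg : ∃ W'' : O → O' → ℝ, (∀ z y, 0 ≤ W'' z y) ∧ (∀ z, ∑ y, W'' z y = 1) ∧
      ∀ x y, W' x y = ∑ z, W'' z y * W x z) :
    ∀ a b : I, ∑ z, Real.sqrt (W a z * W b z) ≤ ∑ y, Real.sqrt (W' a y * W' b y) :=
  pairwise_bhattacharyya_le_of_degraded_general W W' hW0 hdeg
end

section
/- Degradation of channels is preserved under summing: if W' is a degradation of W, then the average Bhattacharyya parameter satisfies Z(W) ≤ Z(W'), where Z(V) = (1/(q(q−1))) Σ_{x≠x'} Σ_y √(V(y|x)V(y|x')). -/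
/-- If `W'` is a degradation of `W` (channels with input alphabet a finite
field `F` with `q` elements), then the average Bhattacharyya parameters satisfy
`Z(W) ≤ Z(W')`. -/
theorem bhattacharyya_le_of_degraded
    {F O O' : Type*} [Field F] [Fintype F] [DecidableEq F] [Fintype O] [Fintype O']
    (W : F → O → ℝ) (W' : F → O' → ℝ)
    (hW0 : ∀ x y, 0 ≤ W x y) (hW1 : ∀ x, ∑ y, W x y = 1)
    (hW'0 : ∀ x y, 0 ≤ W' x y) (hW'1 : ∀ x, ∑ y, W' x y = 1)
    (hdeg : ∃ W'' : O → O' → ℝ, (∀ z y, 0 ≤ W'' z y) ∧ (∀ z, ∑ y, W'' z y = 1) ∧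
      ∀ x y, W' x y = ∑ z, W'' z y * W x z) :
    (1 / ((Fintype.card F : ℝ) * ((Fintype.card F : ℝ) - 1))) *
        ∑ x : F, ∑ x' ∈ Finset.univ.filter (fun x' => x' ≠ x),
          ∑ z, Real.sqrt (W x z * W x' z)
      ≤ (1 / ((Fintype.card F : ℝ) * ((Fintype.card F : ℝ) - 1))) *
        ∑ x : F, ∑ x' ∈ Finset.univ.filter (fun x' => x' ≠ x),
          ∑ y, Real.sqrt (W' x y * W' x' y) := by
  obtain ⟨W'', hW''0, hW''1, hW''⟩ := hdeg
  have key : ∀ x x' : F, ∑ z, Real.sqrt (W x z * W x' z)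
      ≤ ∑ y, Real.sqrt (W' x y * W' x' y) := by
    intro x x'
    calc ∑ z, Real.sqrt (W x z * W x' z)
        = ∑ z, ∑ y, W'' z y * Real.sqrt (W x z * W x' z) := by
          refine Finset.sum_congr rfl fun z _ => ?_
          rw [← Finset.sum_mul, hW''1, one_mul]
      _ = ∑ y, ∑ z, W'' z y * Real.sqrt (W x z * W x' z) := Finset.sum_comm
      _ ≤ ∑ y, Real.sqrt (W' x y * W' x' y) := by
          refine Finset.sum_le_sum fun y _ => ?_
          have h := Finset.sum_sq_le_sum_mul_sum_of_sq_eq_mul Finset.univ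
            (r := fun z => W'' z y * Real.sqrt (W x z * W x' z))
            (f := fun z => W'' z y * W x z) (g := fun z => W'' z y * W x' z)
            (fun z _ => mul_nonneg (hW''0 z y) (hW0 x z))
            (fun z _ => mul_nonneg (hW''0 z y) (hW0 x' z))
            (fun z _ => by
              rw [mul_pow, Real.sq_sqrt (mul_nonneg (hW0 x z) (hW0 x' z))]
              ring)
          have hnn : 0 ≤ ∑ z, W'' z y * Real.sqrt (W x z * W x' z) :=
            Finset.sum_nonneg fun z _ =>
              mul_nonneg (hW''0 z y) (Real.sqrt_nonneg _)
          have := Real.sqrt_le_sqrt h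
          rwa [Real.sqrt_sq hnn, ← hW'' x y, ← hW'' x' y] at this
  have hc : (0:ℝ) ≤ 1 / ((Fintype.card F : ℝ) * ((Fintype.card F : ℝ) - 1)) := by
    rcases le_or_gt ((Fintype.card F : ℝ)) 1 with h | h
    · have h1 : (1:ℝ) ≤ Fintype.card F := by
        exact_mod_cast Fintype.card_pos
      have : (Fintype.card F : ℝ) = 1 := le_antisymm h h1
      simp [this]
    · exact div_nonneg zero_le_one (mul_pos (lt_trans one_pos h) (sub_pos.mpr h)).le
  exact mul_le_mul_of_nonneg_left
    (Finset.sum_le_sum fun x _ => Finset.sum_le_sum fun x' _ => key x x') hc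
end

section
/- Let G be an l×l matrix over F_q with rows G_1,…,G_l and G' an l'×l' matrix over F_q with rows G'_1,…,G'_{l'}, both non-singular, with partial distances D_i(G) = d(G_i, span(G_{i+1},…,G_l)) and similarly D_{i'}(G'). Then the partial distances of the Kronecker product G' ⊗ G satisfy D_k(G' ⊗ G) = D_{i'}(G') · D_i(G), where k = (i'−1)l + i. -/
/-!
The rows of `G' ⊗ G` after `(i', i)` are the `G'ⱼ' ⊗ Gⱼ` with `j' > i'`, together with the
`G'ᵢ' ⊗ Gⱼ` with `j > i`. If `v` and `v'` are closest points to `Gᵢ` and `G'ᵢ'` in the spans of the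
later rows, then `G'ᵢ' ⊗ v + v' ⊗ (Gᵢ - v)` lies in the span of the later rows of `G' ⊗ G` and
differs from `G'ᵢ' ⊗ Gᵢ` by `(G'ᵢ' - v') ⊗ (Gᵢ - v)`, of weight `D_{i'}(G') · D_i(G)`.
Conversely every vector of that span is `G'ᵢ' ⊗ v + b` with `v` in the later row span of `G` and
every column of `b` in the later row span of `G'`. In each of the at least `D_i(G)` columns `r`
where `Gᵢ - v` does not vanish, `G'ᵢ' ⊗ (Gᵢ - v) - b` is a nonzero multiple of `G'ᵢ'` minus a
vector of the later row span of `G'`, so it has weight at least `D_{i'}(G')` there.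
-/

/-- The `i`-th partial distance of a matrix `G` with linearly ordered row index:
`D_i(G) = min { d_H(G_i, v) : v ∈ span of the rows strictly after row i }`. -/
noncomputable def partialDist {F : Type*} [Field F] [DecidableEq F]
    {ι κ : Type*} [Fintype κ] [LinearOrder ι] (G : Matrix ι κ F) (i : ι) : ℕ :=
  sInf {d : ℕ | ∃ v ∈ Submodule.span F {w : κ → F | ∃ j, i < j ∧ w = G j},
    d = hammingDist (G i) v}

instance {α β : Type*} [Fintype α] [Fintype β] : Fintype (α ×ₗ β) :=
  inferInstanceAs (Fintype (α × β))

section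

open Finset Submodule

variable {F : Type*} [Field F]

section PartialDist

variable {ι κ : Type*} [LinearOrder ι]

def laterRowSpan (G : Matrix ι κ F) (i : ι) : Submodule F (κ → F) :=
  span F {w | ∃ j, i < j ∧ w = G j}

variable [DecidableEq F] [Fintype κ]

lemma partialDist_le_hammingDist (G : Matrix ι κ F) (i : ι) {v : κ → F}
    (hv : v ∈ laterRowSpan G i) : partialDist G i ≤ hammingDist (G i) v :=
  Nat.sInf_le ⟨v, hv, rfl⟩

lemma exists_hammingDist_eq_partialDist (G : Matrix ι κ F) (i : ι) :
    ∃ v ∈ laterRowSpan G i, hammingDist (G i) v = partialDist G i := by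
  obtain ⟨v, hv, hd⟩ := Nat.sInf_mem (⟨_, 0, zero_mem _, rfl⟩ :
    {d : ℕ | ∃ v ∈ laterRowSpan G i, d = hammingDist (G i) v}.Nonempty)
  exact ⟨v, hv, hd.symm⟩

lemma le_partialDist (G : Matrix ι κ F) (i : ι) {d : ℕ}
    (h : ∀ v ∈ laterRowSpan G i, d ≤ hammingDist (G i) v) : d ≤ partialDist G i := by
  obtain ⟨v, hv, hd⟩ := exists_hammingDist_eq_partialDist G i
  exact hd ▸ h v hv

end PartialDist

section KroneckerVector

variable {κ κ' : Type*}

def kronVec : (κ' → F) →ₗ[F] (κ → F) →ₗ[F] (κ' × κ → F) :=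
  LinearMap.mk₂ F (fun a b c => a c.1 * b c.2)
    (fun _ _ _ => by ext; simp [add_mul]) (fun _ _ _ => by ext; simp [mul_assoc])
    (fun _ _ _ => by ext; simp [mul_add]) (fun _ _ _ => by ext; simp [mul_left_comm])

@[simp]
lemma kronVec_apply (a : κ' → F) (b : κ → F) (c : κ' × κ) : kronVec a b c = a c.1 * b c.2 :=
  rfl

variable [DecidableEq F] [Fintype κ] [Fintype κ']

lemma hammingNorm_kronVec (a : κ' → F) (b : κ → F) :
    hammingNorm (kronVec a b) = hammingNorm a * hammingNorm b := by
  simp only [hammingNorm, ← card_product]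
  congr 1
  ext c
  simp

lemma hammingNorm_eq_sum_columns (x : κ' × κ → F) :
    hammingNorm x = ∑ r : κ, hammingNorm fun r' => x (r', r) := by
  simp only [hammingNorm, card_filter]
  exact Fintype.sum_prod_type_right _

end KroneckerVector

section Columnwise

variable {κ κ' : Type*}

lemma hammingDist_eq_hammingNorm_sub [DecidableEq F] [Fintype κ] (x y : κ → F) :
    hammingDist x y = hammingNorm (x - y) := by
  rw [hammingDist_comm, hammingDist_eq_hammingNorm, neg_add_eq_sub]

def columnwise (S : Submodule F (κ' → F)) (κ : Type*) : Submodule F (κ' × κ → F) :=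
  ⨅ r : κ, S.comap (LinearMap.funLeft F F fun r' => (r', r))

variable {S : Submodule F (κ' → F)}

lemma mem_columnwise {b : κ' × κ → F} : b ∈ columnwise S κ ↔ ∀ r, (fun r' => b (r', r)) ∈ S := by
  simp only [columnwise, mem_iInf, mem_comap]
  rfl

lemma kronVec_mem_columnwise {s : κ' → F} (hs : s ∈ S) (u : κ → F) :
    kronVec s u ∈ columnwise S κ :=
  mem_columnwise.2 fun r => by
    convert S.smul_mem (u r) hs using 1
    ext; simp [mul_comm]

variable [DecidableEq F] [Fintype κ] [Fintype κ']

lemma mul_hammingNorm_le_hammingNorm_kronVec_sub {a : κ' → F} {D : ℕ}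
    (hD : ∀ s ∈ S, D ≤ hammingDist a s) (x : κ → F) {b : κ' × κ → F}
    (hb : b ∈ columnwise S κ) : D * hammingNorm x ≤ hammingNorm (kronVec a x - b) := by
  set col : κ → κ' → F := fun r r' => (kronVec a x - b) (r', r)
  have hcol : ∀ r, x r ≠ 0 → D ≤ hammingNorm (col r) := by
    intro r hr
    have hscale : col r = x r • (a - (x r)⁻¹ • fun r' => b (r', r)) := by
      ext r'
      simp only [col, Pi.sub_apply, kronVec_apply, Pi.smul_apply, smul_eq_mul]
      field_simp
    rw [hscale, hammingNorm_smul fun _ => (IsRegular.of_ne_zero hr).left.isSMulRegular,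
      ← hammingDist_eq_hammingNorm_sub]
    exact hD _ (S.smul_mem _ (mem_columnwise.1 hb r))
  calc D * hammingNorm x = ∑ _r ∈ univ.filter (x · ≠ 0), D := by
        rw [sum_const, smul_eq_mul, mul_comm, hammingNorm]
    _ ≤ ∑ r ∈ univ.filter (x · ≠ 0), hammingNorm (col r) :=
        sum_le_sum fun r hr => hcol r (mem_filter.1 hr).2
    _ ≤ ∑ r, hammingNorm (col r) := sum_le_sum_of_subset (subset_univ _)
    _ = hammingNorm (kronVec a x - b) := (hammingNorm_eq_sum_columns _).symm

end Columnwise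

section Kronecker

open scoped Kronecker

variable {ι ι' κ κ' : Type*} (G' : Matrix ι' κ' F) (G : Matrix ι κ F)

def kroneckerLex : Matrix (ι' ×ₗ ι) (κ' × κ) F := (G' ⊗ₖ G).submatrix ofLex id

@[simp]
lemma kroneckerLex_toLex (j' : ι') (j : ι) :
    kroneckerLex G' G (toLex (j', j)) = kronVec (G' j') (G j) :=
  rfl

variable [LinearOrder ι] [LinearOrder ι'] (i' : ι') (i : ι)

lemma map₂_kronVec_le_laterRowSpan_left :
    map₂ kronVec (span F {G' i'}) (laterRowSpan G i) ≤
      laterRowSpan (kroneckerLex G' G) (toLex (i', i)) := by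
  rw [laterRowSpan, map₂_span_span]
  refine span_le.2 ?_
  rintro _ ⟨_, rfl, _, ⟨j, hj, rfl⟩, rfl⟩
  exact subset_span ⟨toLex (i', j), Prod.Lex.toLex_lt_toLex.2 (Or.inr ⟨rfl, hj⟩), rfl⟩

lemma map₂_kronVec_le_laterRowSpan_right :
    map₂ kronVec (laterRowSpan G' i') (span F (Set.range G)) ≤
      laterRowSpan (kroneckerLex G' G) (toLex (i', i)) := by
  rw [laterRowSpan, map₂_span_span]
  refine span_le.2 ?_
  rintro _ ⟨_, ⟨j', hj', rfl⟩, _, ⟨j, rfl⟩, rfl⟩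
  exact subset_span ⟨toLex (j', j), Prod.Lex.toLex_lt_toLex.2 (Or.inl hj'), rfl⟩

lemma laterRowSpan_kroneckerLex_le :
    laterRowSpan (kroneckerLex G' G) (toLex (i', i)) ≤
      (laterRowSpan G i).map (kronVec (G' i')) ⊔ columnwise (laterRowSpan G' i') κ := by
  refine span_le.2 ?_
  rintro _ ⟨⟨j', j⟩, hp, rfl⟩
  change toLex (i', i) < toLex (j', j) at hp
  rcases Prod.Lex.toLex_lt_toLex.1 hp with hj' | ⟨rfl, hj⟩
  · have hrow : G' j' ∈ laterRowSpan G' i' := subset_span ⟨j', hj', rfl⟩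
    exact mem_sup_right (kronVec_mem_columnwise hrow _)
  · exact mem_sup_left ⟨G j, subset_span ⟨j, hj, rfl⟩, rfl⟩

variable [DecidableEq F] [Fintype κ] [Fintype κ']

lemma partialDist_kroneckerLex_le :
    partialDist (kroneckerLex G' G) (toLex (i', i)) ≤ partialDist G' i' * partialDist G i := by
  obtain ⟨v, hv, hdv⟩ := exists_hammingDist_eq_partialDist G i
  obtain ⟨v', hv', hdv'⟩ := exists_hammingDist_eq_partialDist G' i'
  have hGv : G i - v ∈ span F (Set.range G) :=
    sub_mem (subset_span ⟨i, rfl⟩) (span_mono (by rintro _ ⟨j, -, rfl⟩; exact ⟨j, rfl⟩) hv)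
  have hw : kronVec (G' i') v + kronVec v' (G i - v) ∈
      laterRowSpan (kroneckerLex G' G) (toLex (i', i)) :=
    add_mem (map₂_kronVec_le_laterRowSpan_left G' G i' i
        (apply_mem_map₂ _ (mem_span_singleton_self _) hv))
      (map₂_kronVec_le_laterRowSpan_right G' G i' i (apply_mem_map₂ _ hv' hGv))
  calc partialDist (kroneckerLex G' G) (toLex (i', i))
      ≤ hammingDist (kronVec (G' i') (G i)) (kronVec (G' i') v + kronVec v' (G i - v)) :=
        partialDist_le_hammingDist _ _ hw
    _ = hammingNorm (kronVec (G' i' - v') (G i - v)) := by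
        rw [hammingDist_eq_hammingNorm_sub]
        congr 1
        simp only [map_sub, LinearMap.sub_apply]
        abel
    _ = partialDist G' i' * partialDist G i := by
        rw [hammingNorm_kronVec, ← hammingDist_eq_hammingNorm_sub,
          ← hammingDist_eq_hammingNorm_sub, hdv, hdv']

lemma le_partialDist_kroneckerLex :
    partialDist G' i' * partialDist G i ≤ partialDist (kroneckerLex G' G) (toLex (i', i)) := by
  refine le_partialDist _ _ fun w hw => ?_
  obtain ⟨_, ⟨v, hv, rfl⟩, b, hb, rfl⟩ := mem_sup.1 (laterRowSpan_kroneckerLex_le G' G i' i hw)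
  calc partialDist G' i' * partialDist G i
      ≤ partialDist G' i' * hammingNorm (G i - v) := by
        rw [← hammingDist_eq_hammingNorm_sub]
        exact Nat.mul_le_mul_left _ (partialDist_le_hammingDist G i hv)
    _ ≤ hammingNorm (kronVec (G' i') (G i - v) - b) :=
        mul_hammingNorm_le_hammingNorm_kronVec_sub
          (fun _ hs => partialDist_le_hammingDist G' i' hs) _ hb
    _ = hammingDist (kroneckerLex G' G (toLex (i', i))) (kronVec (G' i') v + b) := by
        rw [hammingDist_eq_hammingNorm_sub, kroneckerLex_toLex, map_sub, sub_sub]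

end Kronecker

end

theorem partialDist_kronecker_general
    {F : Type*} [Field F] [DecidableEq F] {l l' : ℕ}
    (G : Matrix (Fin l) (Fin l) F) (G' : Matrix (Fin l') (Fin l') F)
    (i : Fin l) (i' : Fin l') :
    partialDist
      (Matrix.of fun (p : Fin l' ×ₗ Fin l) (c : Fin l' × Fin l) =>
        G' (ofLex p).1 c.1 * G (ofLex p).2 c.2)
      (toLex (i', i))
      = partialDist G' i' * partialDist G i :=
  le_antisymm (partialDist_kroneckerLex_le G' G i' i) (le_partialDist_kroneckerLex G' G i' i)

/-- Partial distances are multiplicative under the Kronecker product: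
`D_{(i',i)}(G' ⊗ G) = D_{i'}(G') · D_i(G)`, rows of `G' ⊗ G` being ordered
lexicographically. -/
theorem partialDist_kronecker
    {F : Type*} [Field F] [DecidableEq F] {l l' : ℕ}
    (G : Matrix (Fin l) (Fin l) F) (G' : Matrix (Fin l') (Fin l') F)
    (hG : IsUnit G.det) (hG' : IsUnit G'.det) (i : Fin l) (i' : Fin l') :
    partialDist
      (Matrix.of fun (p : Fin l' ×ₗ Fin l) (c : Fin l' × Fin l) =>
        G' (ofLex p).1 c.1 * G (ofLex p).2 c.2)
      (toLex (i', i))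
      = partialDist G' i' * partialDist G i :=
  partialDist_kronecker_general G G' i i'
end

section
/- Let W : F_q → O be a discrete memoryless channel that is symmetric with respect to field operations (SOF), and G a non-singular l×l matrix over F_q. Then each split channel W₁^{(i)} : F_q → O^l × F_q^{i−1} obtained from one polarization step with kernel G is again an SOF channel. -/
/-- A channel `W : F_q → O` is symmetric w.r.t. the field addition: there are
permutations `σ_x` of `O` with `W(y|x) = W(σ_{x'−x}(y)|x')` for all `x, x', y`. -/
def AddSymmetric {Fq O : Type*} [Sub Fq] (W : Fq → O → ℝ) : Prop :=
  ∃ σ : Fq → Equiv.Perm O, ∀ x x' y, W x y = W x' (σ (x' - x) y)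

/-- A channel `W : F_q → O` is symmetric w.r.t. the field product: for each `α ≠ 0`
there is a permutation `ψ_α` of `O` with `W(y|x) = W(ψ_α(y)|αx)` for all `x, y`. -/
def MulSymmetric {Fq O : Type*} [Mul Fq] [Zero Fq] (W : Fq → O → ℝ) : Prop :=
  ∃ ψ : Fq → Equiv.Perm O, ∀ (α : Fq) x y, α ≠ 0 → W x y = W (α * x) (ψ α y)

/-- Symmetric with respect to the field operations (SOF). -/
def SOF {Fq O : Type*} [Field Fq] (W : Fq → O → ℝ) : Prop :=
  AddSymmetric W ∧ MulSymmetric W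

open scoped Classical in
/-- The `i`-th split channel `W₁^{(i)} : F_q → O^l × F_q^{i-1}` of one polarization
step with kernel `G`:
`W₁^{(i)}(y₁^l, u₁^{i−1} | uᵢ) = (1/q^{l−1}) Σ_{u_{i+1}^l} Π_k W(y_k | (uG)_k)`. -/
noncomputable def splitCh {Fq O : Type*} [Field Fq] [Fintype Fq] {l : ℕ}
    (W : Fq → O → ℝ) (G : Matrix (Fin l) (Fin l) Fq) (i : Fin l) :
    Fq → ((Fin l → O) × (Fin i → Fq)) → ℝ :=
  fun ui yu =>
    (1 / (Fintype.card Fq : ℝ) ^ (l - 1)) *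
      ∑ u : Fin l → Fq,
        if u i = ui ∧ ∀ j : Fin i, u (Fin.castLE i.isLt.le j) = yu.2 j then
          ∏ k, W (∑ r, u r * G r k) (yu.1 k)
        else 0

/-! Re-index the sum defining `splitCh W G i` by `u ↦ u + Pi.single i d` (resp. `u ↦ α • u`).
This fixes (resp. scales) the known symbols `u₁^{i−1}` and maps `uᵢ` to `uᵢ + d` (resp. `α uᵢ`),
while by linearity it shifts each codeword symbol `(u G)ₖ` by `d Gᵢₖ` (resp. scales it by `α`);
the symmetries of `W` absorb these changes one output coordinate at a time. -/

open Matrix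

theorem Fin.castLE_ne_self {n : ℕ} (i : Fin n) (j : Fin i) : Fin.castLE i.isLt.le j ≠ i :=
  Fin.ne_of_lt j.isLt

section SplitChannel

variable {Fq O : Type*} [Field Fq] [Fintype Fq] {l : ℕ}
  (W : Fq → O → ℝ) (G : Matrix (Fin l) (Fin l) Fq) (i : Fin l)

open scoped Classical in
theorem splitCh_apply (x : Fq) (yu : (Fin l → O) × (Fin i → Fq)) :
    splitCh W G i x yu = (1 / (Fintype.card Fq : ℝ) ^ (l - 1)) *
      ∑ u : Fin l → Fq,
        if u i = x ∧ ∀ j : Fin i, u (Fin.castLE i.isLt.le j) = yu.2 j then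
          ∏ k, W ((u ᵥ* G) k) (yu.1 k)
        else 0 :=
  rfl

theorem splitCh_eq_of_equiv (e : (Fin l → Fq) ≃ (Fin l → Fq)) {x x' : Fq}
    {yu yu' : (Fin l → O) × (Fin i → Fq)}
    (hcond : ∀ u, (e u i = x' ∧ ∀ j : Fin i, e u (Fin.castLE i.isLt.le j) = yu'.2 j) ↔
      (u i = x ∧ ∀ j : Fin i, u (Fin.castLE i.isLt.le j) = yu.2 j))
    (hprod : ∀ u k, W ((e u ᵥ* G) k) (yu'.1 k) = W ((u ᵥ* G) k) (yu.1 k)) :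
    splitCh W G i x yu = splitCh W G i x' yu' := by
  classical
  rw [splitCh_apply, splitCh_apply]
  congr 1
  exact Fintype.sum_equiv e _ _ fun u =>
    (if_congr (hcond u) (Finset.prod_congr rfl fun k _ => hprod u k) rfl).symm

variable {W}

theorem AddSymmetric.splitCh (hW : AddSymmetric W) : AddSymmetric (splitCh W G i) := by
  classical
  obtain ⟨σ, hσ⟩ := hW
  refine ⟨fun d => (Equiv.piCongrRight fun k => σ (d * G i k)).prodCongr (Equiv.refl _),
    fun x x' yu => splitCh_eq_of_equiv W G i (Equiv.addRight (Pi.single i (x' - x)))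
      (fun u => ?_) fun u k => ?_⟩
  · simp [Fin.castLE_ne_self, ← eq_sub_iff_add_eq]
  · simpa [add_vecMul] using (hσ ((u ᵥ* G) k) ((u ᵥ* G) k + (x' - x) * G i k) (yu.1 k)).symm

theorem MulSymmetric.splitCh (hW : MulSymmetric W) : MulSymmetric (splitCh W G i) := by
  classical
  obtain ⟨ψ, hψ⟩ := hW
  refine ⟨fun α => if hα : α = 0 then Equiv.refl _ else
    (Equiv.piCongrRight fun _ => ψ α).prodCongr (MulAction.toPerm (Units.mk0 α hα)),
    fun α x yu hα => splitCh_eq_of_equiv W G i (MulAction.toPerm (Units.mk0 α hα))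
      (fun u => ?_) fun u k => ?_⟩
  · simp [hα]
  · simpa [hα, smul_vecMul] using (hψ α ((u ᵥ* G) k) (yu.1 k) hα).symm

end SplitChannel

theorem splitCh_SOF_general {Fq O : Type*} [Field Fq] [Fintype Fq] {l : ℕ}
    (W : Fq → O → ℝ)
    (G : Matrix (Fin l) (Fin l) Fq)
    (hSOF : SOF W) :
    ∀ i : Fin l, SOF (splitCh W G i) :=
  fun i => ⟨hSOF.1.splitCh G i, hSOF.2.splitCh G i⟩

/-- One polarization step with a non-singular kernel `G` over a SOF
channel `W` yields split channels `W₁^{(i)}` that are again SOF channels. -/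
theorem splitCh_SOF {Fq O : Type*} [Field Fq] [Fintype Fq] [Fintype O] {l : ℕ}
    (W : Fq → O → ℝ)
    (hW0 : ∀ x y, 0 ≤ W x y) (hW1 : ∀ x, ∑ y, W x y = 1)
    (G : Matrix (Fin l) (Fin l) Fq) (hG : IsUnit G.det)
    (hSOF : SOF W) :
    ∀ i : Fin l, SOF (splitCh W G i) :=
  splitCh_SOF_general W G hSOF
end

section
/- If W' : F_q → O' is a degradation of W : F_q → O and G is a non-singular l×l matrix over F_q, then for each i ∈ {1,…,l}, the split channel W'₁^{(i)} is a degradation of W₁^{(i)}. -/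
/-- `W'` is a degradation of `W`: `W'(y|x) = Σ_z W''(y|z) W(z|x)` for some channel
`W'' : O → O'`. -/
def Degraded {I O O' : Type*} [Fintype O] [Fintype O']
    (W' : I → O' → ℝ) (W : I → O → ℝ) : Prop :=
  ∃ W'' : O → O' → ℝ, (∀ z y, 0 ≤ W'' z y) ∧ (∀ z, ∑ y, W'' z y = 1) ∧
    ∀ x y, W' x y = ∑ z, W'' z y * W x z

/-! The degrading channel is `V : O → O'` applied to every coordinate of `y`, with the revealed
prefix `u₁^{i-1}` passed through unchanged. It works because the split channel is a mixture, with
weights depending only on `u_i` and the prefix, of the product channels `u ↦ ∏ₖ W((uG)ₖ | yₖ)`,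
and post-composition with a channel commutes with such mixtures and with products. -/

open Finset

namespace Degraded

theorem comp {I J O O' : Type*} [Fintype O] [Fintype O'] {W : I → O → ℝ} {W' : I → O' → ℝ}
    (h : Degraded W' W) (f : J → I) : Degraded (fun x => W' (f x)) (fun x => W (f x)) := by
  obtain ⟨V, hV0, hV1, hVW⟩ := h
  exact ⟨V, hV0, hV1, fun x => hVW (f x)⟩

theorem pi {I O O' : Type*} [Fintype O] [Fintype O'] {W : I → O → ℝ} {W' : I → O' → ℝ}
    (ι : Type*) [Fintype ι] [DecidableEq ι] (h : Degraded W' W) :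
    Degraded (fun (x : ι → I) (y : ι → O') => ∏ k, W' (x k) (y k))
      (fun (x : ι → I) (z : ι → O) => ∏ k, W (x k) (z k)) := by
  obtain ⟨V, hV0, hV1, hVW⟩ := h
  refine ⟨fun (z : ι → O) (y : ι → O') => ∏ k, V (z k) (y k),
    fun z y => prod_nonneg fun k _ => hV0 _ _, fun z => ?_, fun x y => ?_⟩
  · rw [← Fintype.prod_sum fun k y => V (z k) y]
    simp only [hV1, prod_const_one]
  · simp only [hVW, Fintype.prod_sum, prod_mul_distrib]

theorem mix {I J O O' B : Type*} [Fintype J] [Fintype O] [Fintype O'] [Fintype B]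
    [DecidableEq B] {W : J → O → ℝ} {W' : J → O' → ℝ} (h : Degraded W' W) (A : I → J → B → ℝ) :
    Degraded (fun x (yb : O' × B) => ∑ a, A x a yb.2 * W' a yb.1)
      (fun x (zb : O × B) => ∑ a, A x a zb.2 * W a zb.1) := by
  obtain ⟨V, hV0, hV1, hVW⟩ := h
  refine ⟨fun zb yb => if zb.2 = yb.2 then V zb.1 yb.1 else 0,
    fun zb yb => ite_nonneg (hV0 _ _) le_rfl, fun zb => ?_, fun x yb => ?_⟩
  · simp only [Fintype.sum_prod_type, sum_ite_eq, mem_univ, if_true, hV1]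
  · simp only [Fintype.sum_prod_type, ite_mul, zero_mul, sum_ite_eq', mem_univ, if_true]
    simp only [hVW, mul_sum]
    rw [sum_comm]
    exact sum_congr rfl fun _ _ => sum_congr rfl fun _ _ => by ring

end Degraded

open scoped Classical in
theorem splitCh_eq_mix {Fq O : Type*} [Field Fq] [Fintype Fq] {l : ℕ}
    (W : Fq → O → ℝ) (G : Matrix (Fin l) (Fin l) Fq) (i : Fin l) :
    splitCh W G i = fun ui yu => ∑ u : Fin l → Fq,
      (if u i = ui ∧ ∀ j : Fin i, u (Fin.castLE i.isLt.le j) = yu.2 j then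
        1 / (Fintype.card Fq : ℝ) ^ (l - 1) else 0) * ∏ k, W (∑ r, u r * G r k) (yu.1 k) := by
  ext ui yu
  simp only [splitCh, mul_sum, ite_mul, zero_mul, mul_ite, mul_zero]

theorem splitCh_degraded_general {Fq O O' : Type*} [Field Fq] [Fintype Fq]
    [Fintype O] [Fintype O'] {l : ℕ}
    (W : Fq → O → ℝ) (W' : Fq → O' → ℝ)
    (G : Matrix (Fin l) (Fin l) Fq)
    (hdeg : Degraded W' W) :
    ∀ i : Fin l, Degraded (splitCh W' G i) (splitCh W G i) := by
  classical
  intro i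
  rw [splitCh_eq_mix, splitCh_eq_mix]
  exact ((hdeg.pi (Fin l)).comp fun u k => ∑ r, u r * G r k).mix
    fun ui (u : Fin l → Fq) (b : Fin i → Fq) =>
      if u i = ui ∧ ∀ j : Fin i, u (Fin.castLE i.isLt.le j) = b j then
        1 / (Fintype.card Fq : ℝ) ^ (l - 1) else 0

/-- Degradation is preserved by the polarization step: if `W' ⪯ W`
then `W'₁^{(i)} ⪯ W₁^{(i)}` for every `i`. -/
theorem splitCh_degraded {Fq O O' : Type*} [Field Fq] [Fintype Fq]
    [Fintype O] [Fintype O'] {l : ℕ}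
    (W : Fq → O → ℝ) (W' : Fq → O' → ℝ)
    (hW0 : ∀ x y, 0 ≤ W x y) (hW1 : ∀ x, ∑ y, W x y = 1)
    (hW'0 : ∀ x y, 0 ≤ W' x y) (hW'1 : ∀ x, ∑ y, W' x y = 1)
    (G : Matrix (Fin l) (Fin l) Fq) (hG : IsUnit G.det)
    (hdeg : Degraded W' W) :
    ∀ i : Fin l, Degraded (splitCh W' G i) (splitCh W G i) :=
  splitCh_degraded_general W W' G hdeg
end
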